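/- arXiv:2201.12497 — 3 statements merged into one kernel-verified Lean document; each statement's English description precedes it below -/
import Mathlib

section
/- The Yang--Baxter equation holds for the stochastic six vertex weights: for any fixed $i_1,i_2,i_3,j_1,j_2,j_3 \in \{0,1\}$ and $q,u,v \in (0,1)$, $\sum_{k_1,k_2,k_3 \in \{0,1\}} X_{u,v}(i_2,i_1;k_2,k_1)\, w_u(i_3,k_1;k_3,j_1)\, w_v(k_3,k_2;j_3,j_2) = \sum_{k_1',k_2',k_3' \in \{0,1\}} w_v(i_3,i_2;k_3',k_2')\, w_u(k_3',i_1;j_3,k_1')\, X_{u,v}(k_2',k_1';j_2,j_1)$, where $X_{u,v}(i,j;k,l) := w_{u/v}(i,j;k,l)$. -/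
/-- Stochastic six vertex weights `w_u(i₁,j₁;i₂,j₂)`. -/
noncomputable def sixVertexW (q u : ℝ) : ℕ → ℕ → ℕ → ℕ → ℝ
  | 0, 0, 0, 0 => 1
  | 1, 1, 1, 1 => 1
  | 1, 0, 1, 0 => q * (1 - u) / (1 - q * u)
  | 0, 1, 0, 1 => (1 - u) / (1 - q * u)
  | 1, 0, 0, 1 => (1 - q) / (1 - q * u)
  | 0, 1, 1, 0 => u * (1 - q) / (1 - q * u)
  | _, _, _, _ => 0

/-- The cross vertex weight `X_{u,v} = w_{u/v}`. -/
noncomputable def sixVertexX (q u v : ℝ) : ℕ → ℕ → ℕ → ℕ → ℝ :=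
  sixVertexW q (u / v)

/-! Multiplying the weights by their denominators gives the homogeneous weights `sixVertexR q u v`,
with `w_u = R(u, 1) / (1 - q u)` and `X_{u,v} = R(u, v) / (v - q u)`. Both sides of the Yang--Baxter
equation carry the same product of denominators, and for the homogeneous weights the equation
`R₁₂(u, v) R₁₃(u, w) R₂₃(v, w) = R₂₃(v, w) R₁₃(u, w) R₁₂(u, v)` is a polynomial identity, checked
entry by entry. -/

def sixVertexR {R : Type*} [CommRing R] (q u v : R) : ℕ → ℕ → ℕ → ℕ → R
  | 0, 0, 0, 0 => v - q * u
  | 1, 1, 1, 1 => v - q * u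
  | 1, 0, 1, 0 => q * (v - u)
  | 0, 1, 0, 1 => v - u
  | 1, 0, 0, 1 => v * (1 - q)
  | 0, 1, 1, 0 => u * (1 - q)
  | _, _, _, _ => 0

section CommRing

variable {R : Type*} [CommRing R]

theorem sixVertexR_mul_mul (q t u v : R) (a b c d : ℕ) :
    sixVertexR q (t * u) (t * v) a b c d = t * sixVertexR q u v a b c d := by
  unfold sixVertexR
  split <;> ring

set_option maxHeartbeats 1000000 in
theorem sixVertexR_yang_baxter (q u v w : R) {i₁ i₂ i₃ j₁ j₂ j₃ : ℕ} (hi₁ : i₁ ≤ 1)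
    (hi₂ : i₂ ≤ 1) (hi₃ : i₃ ≤ 1) (hj₁ : j₁ ≤ 1) (hj₂ : j₂ ≤ 1) (hj₃ : j₃ ≤ 1) :
    ∑ k₁ ∈ Finset.range 2, ∑ k₂ ∈ Finset.range 2, ∑ k₃ ∈ Finset.range 2,
      sixVertexR q u v i₂ i₁ k₂ k₁ * sixVertexR q u w i₃ k₁ k₃ j₁ *
        sixVertexR q v w k₃ k₂ j₃ j₂
    = ∑ k₁ ∈ Finset.range 2, ∑ k₂ ∈ Finset.range 2, ∑ k₃ ∈ Finset.range 2,
      sixVertexR q v w i₃ i₂ k₃ k₂ * sixVertexR q u w k₃ i₁ j₃ k₁ *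
        sixVertexR q u v k₂ k₁ j₂ j₁ := by
  simp only [Finset.sum_range_succ, Finset.sum_range_zero, zero_add]
  rcases Nat.le_one_iff_eq_zero_or_eq_one.mp hi₁ with rfl | rfl <;>
  rcases Nat.le_one_iff_eq_zero_or_eq_one.mp hi₂ with rfl | rfl <;>
  rcases Nat.le_one_iff_eq_zero_or_eq_one.mp hi₃ with rfl | rfl <;>
  rcases Nat.le_one_iff_eq_zero_or_eq_one.mp hj₁ with rfl | rfl <;>
  rcases Nat.le_one_iff_eq_zero_or_eq_one.mp hj₂ with rfl | rfl <;>
  rcases Nat.le_one_iff_eq_zero_or_eq_one.mp hj₃ with rfl | rfl <;>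
  simp only [sixVertexR] <;> ring

end CommRing

theorem sixVertexW_eq_div {q u : ℝ} (h : 1 - q * u ≠ 0) (a b c d : ℕ) :
    sixVertexW q u a b c d = sixVertexR q u 1 a b c d / (1 - q * u) := by
  unfold sixVertexW sixVertexR
  split <;> simp_all

theorem sixVertexX_eq_div {q u v : ℝ} (hv : v ≠ 0) (h : v - q * u ≠ 0) (a b c d : ℕ) :
    sixVertexX q u v a b c d = sixVertexR q u v a b c d / (v - q * u) := by
  have hden : v - q * u = v * (1 - q * (u / v)) := by field_simp
  have hnum : sixVertexR q u v a b c d = v * sixVertexR q (u / v) 1 a b c d := by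
    rw [← sixVertexR_mul_mul, mul_div_cancel₀ _ hv, mul_one]
  rw [sixVertexX, sixVertexW_eq_div (right_ne_zero_of_mul (hden ▸ h)), hnum, hden,
    mul_div_mul_left _ _ hv]

theorem sixVertex_yang_baxter_of_ne_zero {q u v : ℝ} (hu : 1 - q * u ≠ 0) (hv : 1 - q * v ≠ 0)
    (hv₀ : v ≠ 0) (huv : v - q * u ≠ 0) {i₁ i₂ i₃ j₁ j₂ j₃ : ℕ} (hi₁ : i₁ ≤ 1) (hi₂ : i₂ ≤ 1)
    (hi₃ : i₃ ≤ 1) (hj₁ : j₁ ≤ 1) (hj₂ : j₂ ≤ 1) (hj₃ : j₃ ≤ 1) :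
    ∑ k₁ ∈ Finset.range 2, ∑ k₂ ∈ Finset.range 2, ∑ k₃ ∈ Finset.range 2,
      sixVertexX q u v i₂ i₁ k₂ k₁ * sixVertexW q u i₃ k₁ k₃ j₁ *
        sixVertexW q v k₃ k₂ j₃ j₂
    = ∑ k₁ ∈ Finset.range 2, ∑ k₂ ∈ Finset.range 2, ∑ k₃ ∈ Finset.range 2,
      sixVertexW q v i₃ i₂ k₃ k₂ * sixVertexW q u k₃ i₁ j₃ k₁ *
        sixVertexX q u v k₂ k₁ j₂ j₁ := by
  simp only [sixVertexX_eq_div hv₀ huv, sixVertexW_eq_div hu, sixVertexW_eq_div hv,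
    div_mul_div_comm, ← Finset.sum_div]
  rw [sixVertexR_yang_baxter q u v 1 hi₁ hi₂ hi₃ hj₁ hj₂ hj₃]
  ring

/-- The Yang--Baxter equation for the stochastic six vertex weights. -/
theorem yang_baxter (q u v : ℝ) (hq : q ∈ Set.Ioo (0:ℝ) 1) (hu : u ∈ Set.Ioo (0:ℝ) 1)
    (hv : v ∈ Set.Ioo (0:ℝ) 1) (huv : u < v)
    (i₁ i₂ i₃ j₁ j₂ j₃ : ℕ) (hi₁ : i₁ ≤ 1) (hi₂ : i₂ ≤ 1) (hi₃ : i₃ ≤ 1)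
    (hj₁ : j₁ ≤ 1) (hj₂ : j₂ ≤ 1) (hj₃ : j₃ ≤ 1) :
    ∑ k₁ ∈ Finset.range 2, ∑ k₂ ∈ Finset.range 2, ∑ k₃ ∈ Finset.range 2,
      sixVertexX q u v i₂ i₁ k₂ k₁ * sixVertexW q u i₃ k₁ k₃ j₁ *
        sixVertexW q v k₃ k₂ j₃ j₂
    = ∑ k₁' ∈ Finset.range 2, ∑ k₂' ∈ Finset.range 2, ∑ k₃' ∈ Finset.range 2,
      sixVertexW q v i₃ i₂ k₃' k₂' * sixVertexW q u k₃' i₁ j₃ k₁' *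
        sixVertexX q u v k₂' k₁' j₂ j₁ := by
  have hqu : q * u < u := mul_lt_of_lt_one_left hu.1 hq.2
  have hqv : q * v < v := mul_lt_of_lt_one_left hv.1 hq.2
  exact sixVertex_yang_baxter_of_ne_zero (by linarith [hu.2]) (by linarith [hv.2]) hv.1.ne'
    (by linarith) hi₁ hi₂ hi₃ hj₁ hj₂ hj₃
end

section
/- Let $E_i$ ($i \geq m$) be independent exponential random variables where $E_i$ has rate $4i$, and let $T > 0$ be fixed. Then for every $c' > 0$ there exists $n_0$ such that for all $n \geq n_0$ and $m = \lfloor n^r/2 \rfloor$ (with fixed $r \in (1/2, 1)$): $\mathbb{P}\Big(\sum_{i=m}^{n} E_i < T\Big) \leq \exp(-c\, n^r)$ for some constant $c > 0$ depending only on $T$ and $r$. -/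
/-!
Chernoff bound at the exponent `s = n ^ r`: the event has probability at most
`exp (s T) * ∏ 4i / (4i + s)`. Since `s ≤ 4i` on the range `i ≥ ⌊s/2⌋`, each factor is at most
`exp (-s / (8i))`, and the harmonic sum over `[⌊s/2⌋, n]` is at least
`log (n + 1) - log (s/2) ≥ (1 - r) log n`. Hence the bound is
`exp (s (T - (1 - r) log n / 8)) ≤ exp (-s)` as soon as `(1 - r) log n ≥ 8 (T + 1)`.
-/

open MeasureTheory ProbabilityTheory Real

open Finset Filter

lemma mgf_id_expMeasure {ρ t : ℝ} (hρ : 0 < ρ) (ht : t < ρ) :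
    mgf id (expMeasure ρ) t = ρ / (ρ - t) := by
  have hdens : ∀ x, x ∉ Set.Ici (0 : ℝ) → (exponentialPDF ρ x).toReal * exp (t * x) = 0 :=
    fun x hx => by simp [exponentialPDF_of_neg (not_le.1 hx)]
  calc mgf id (expMeasure ρ) t
      = ∫ x, (exponentialPDF ρ x).toReal * exp (t * x) :=
        integral_withDensity_eq_integral_toReal_smul
          (measurable_exponentialPDFReal ρ).ennreal_ofReal
          (ae_of_all _ fun _ => ENNReal.ofReal_lt_top) _
    _ = ∫ x in Set.Ioi 0, ρ * exp ((t - ρ) * x) := by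
        rw [← setIntegral_eq_integral_of_forall_compl_eq_zero hdens,
          integral_Ici_eq_integral_Ioi]
        refine setIntegral_congr_fun measurableSet_Ioi fun x hx => ?_
        rw [exponentialPDF_of_nonneg (le_of_lt hx), ENNReal.toReal_ofReal (by positivity),
          mul_assoc, ← exp_add]
        ring_nf
    _ = ρ / (ρ - t) := by
        rw [integral_const_mul, integral_exp_mul_Ioi (by linarith), mul_zero, exp_zero,
          ← neg_sub ρ t, div_neg, neg_div, neg_neg, mul_one_div]

lemma mgf_of_map_eq_expMeasure {Ω : Type*} [MeasurableSpace Ω] {μ : Measure Ω} {X : Ω → ℝ}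
    {ρ t : ℝ} (hX : AEMeasurable X μ) (hlaw : μ.map X = expMeasure ρ) (hρ : 0 < ρ)
    (ht : t < ρ) : mgf X μ t = ρ / (ρ - t) := by
  rw [← mgf_id_map hX, hlaw, mgf_id_expMeasure hρ ht]

lemma measureReal_sum_le_le_exp_mul_prod_of_expMeasure {Ω ι : Type*} [MeasurableSpace Ω]
    {μ : Measure Ω} {E : ι → Ω → ℝ} (hmeas : ∀ i, Measurable (E i)) (hindep : iIndepFun E μ)
    {s : Finset ι} {ρ : ι → ℝ} (hρ : ∀ i ∈ s, 0 < ρ i)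
    (hlaw : ∀ i ∈ s, μ.map (E i) = expMeasure (ρ i)) {θ : ℝ} (hθ : 0 ≤ θ) (T : ℝ) :
    μ.real {ω | ∑ i ∈ s, E i ω ≤ T} ≤ exp (θ * T) * ∏ i ∈ s, ρ i / (ρ i + θ) := by
  have := hindep.isProbabilityMeasure
  have hmgf : ∀ i ∈ s, mgf (E i) μ (-θ) = ρ i / (ρ i + θ) := fun i hi => by
    rw [mgf_of_map_eq_expMeasure (hmeas i).aemeasurable (hlaw i hi) (hρ i hi)
      (by linarith [hρ i hi]), sub_neg_eq_add]
  have hint : ∀ i ∈ s, Integrable (fun ω => exp (-θ * E i ω)) μ := fun i hi =>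
    mgf_pos_iff.1 (by rw [hmgf i hi]; have := hρ i hi; positivity)
  calc μ.real {ω | ∑ i ∈ s, E i ω ≤ T}
      = μ.real {ω | (∑ i ∈ s, E i) ω ≤ T} := by simp only [Finset.sum_apply]
    _ ≤ exp (-(-θ) * T) * mgf (∑ i ∈ s, E i) μ (-θ) :=
        measure_le_le_exp_mul_mgf T (neg_nonpos.2 hθ) (hindep.integrable_exp_mul_sum hmeas hint)
    _ = exp (θ * T) * ∏ i ∈ s, ρ i / (ρ i + θ) := by
        rw [hindep.mgf_sum hmeas, neg_neg, prod_congr rfl hmgf]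

lemma div_add_le_exp_neg {a s : ℝ} (ha : 0 < a) (hs : 0 ≤ s) (hsa : s ≤ a) :
    a / (a + s) ≤ exp (-(s / (2 * a))) := by
  rw [← log_le_iff_le_exp (by positivity)]
  calc log (a / (a + s)) ≤ a / (a + s) - 1 := log_le_sub_one_of_pos (by positivity)
    _ = -(s / (a + s)) := by field_simp; ring
    _ ≤ -(s / (2 * a)) := neg_le_neg (div_le_div_of_nonneg_left hs (by positivity) (by linarith))

lemma log_succ_sub_log_le_inv (k : ℕ) : log (k + 1) - log k ≤ (k : ℝ)⁻¹ := by
  rcases k.eq_zero_or_pos with rfl | hk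
  · simp -- `log 0 = 0` and `0⁻¹ = 0`
  have hk : (0 : ℝ) < k := by exact_mod_cast hk
  calc log (k + 1) - log k = log ((k + 1) / k) := (log_div (by positivity) hk.ne').symm
    _ ≤ (k + 1) / k - 1 := log_le_sub_one_of_pos (by positivity)
    _ = (k : ℝ)⁻¹ := by field_simp; ring

lemma log_succ_sub_log_le_sum_inv (m n : ℕ) :
    log (n + 1) - log m ≤ ∑ i ∈ Icc m n, (i : ℝ)⁻¹ := by
  rcases le_or_gt m (n + 1) with hmn | hmn
  · calc log (n + 1) - log m
          = ∑ i ∈ Ico m (n + 1), (log ((i + 1 : ℕ) : ℝ) - log (i : ℝ)) := by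
          rw [sum_Ico_sub (fun i : ℕ => log (i : ℝ)) hmn]; push_cast; rfl
      _ ≤ ∑ i ∈ Icc m n, (i : ℝ)⁻¹ := by
          rw [← Ico_add_one_right_eq_Icc]
          exact sum_le_sum fun i _ => by push_cast; exact log_succ_sub_log_le_inv i
  · rw [Icc_eq_empty (by omega), sum_empty, sub_nonpos]
    exact log_le_log (by positivity) (by exact_mod_cast hmn.le)

lemma prod_div_add_le_exp_neg_log {a s : ℝ} {m : ℕ} (n : ℕ) (ha : 0 < a) (hm : 0 < m)
    (hs : 0 ≤ s) (hsm : s ≤ a * m) :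
    ∏ i ∈ Icc m n, a * i / (a * i + s) ≤ exp (-(s / (2 * a)) * (log (n + 1) - log m)) := by
  have hpos : ∀ i ∈ Icc m n, (0 : ℝ) < i := fun i hi => by
    have := hm.trans_le (mem_Icc.1 hi).1; positivity
  calc ∏ i ∈ Icc m n, a * i / (a * i + s)
      ≤ ∏ i ∈ Icc m n, exp (-(s / (2 * a)) * (i : ℝ)⁻¹) := by
        refine prod_le_prod (fun i hi => by have := hpos i hi; positivity) fun i hi => ?_
        have hmi : (m : ℝ) ≤ i := by exact_mod_cast (mem_Icc.1 hi).1
        refine (div_add_le_exp_neg (by have := hpos i hi; positivity) hs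
          (hsm.trans (mul_le_mul_of_nonneg_left hmi ha.le))).trans_eq ?_
        congr 1
        ring
    _ = exp (-(s / (2 * a)) * ∑ i ∈ Icc m n, (i : ℝ)⁻¹) := by rw [← exp_sum, mul_sum]
    _ ≤ exp (-(s / (2 * a)) * (log (n + 1) - log m)) :=
        exp_le_exp.2 (mul_le_mul_of_nonpos_left (log_succ_sub_log_le_sum_inv m n)
          (neg_nonpos.2 (by positivity)))

lemma exp_mul_prod_annihilation_rates_le {r T : ℝ} {n : ℕ} (hs : 2 ≤ (n : ℝ) ^ r)
    (hlog : 8 * (T + 1) ≤ (1 - r) * log n) :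
    exp ((n : ℝ) ^ r * T) * ∏ i ∈ Icc ⌊(n : ℝ) ^ r / 2⌋₊ n, 4 * (i : ℝ) / (4 * i + (n : ℝ) ^ r)
      ≤ exp (-1 * (n : ℝ) ^ r) := by
  have hn : (0 : ℝ) < n := by
    rcases n.eq_zero_or_pos with rfl | hn
    · rw [Nat.cast_zero] at hs
      linarith [zero_rpow_le_one r]
    · exact_mod_cast hn
  set s := (n : ℝ) ^ r
  set m := ⌊s / 2⌋₊
  have hm : 0 < m := Nat.floor_pos.2 (by linarith)
  have hsm : s ≤ 4 * m := by
    have := Nat.lt_floor_add_one (s / 2)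
    have : (1 : ℝ) ≤ m := by exact_mod_cast hm
    linarith
  have hlogm : log m ≤ r * log n := calc
    log m ≤ log s :=
      log_le_log (by positivity) (by linarith [Nat.floor_le (by positivity : 0 ≤ s / 2)])
    _ = r * log n := log_rpow hn r
  have hL : s / 8 * (8 * (T + 1)) ≤ s / 8 * (log (n + 1) - log m) :=
    mul_le_mul_of_nonneg_left (by linarith [log_le_log hn (by linarith : (n : ℝ) ≤ n + 1)])
      (by positivity)
  calc exp (s * T) * ∏ i ∈ Icc m n, 4 * (i : ℝ) / (4 * i + s)
      ≤ exp (s * T) * exp (-(s / (2 * 4)) * (log (n + 1) - log m)) :=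
        mul_le_mul_of_nonneg_left (prod_div_add_le_exp_neg_log n four_pos hm (by positivity) hsm)
          (exp_pos _).le
    _ = exp (s * T - s / 8 * (log (n + 1) - log m)) := by rw [← exp_add]; ring_nf
    _ ≤ exp (-1 * s) := exp_le_exp.2 (by linarith)

theorem annihilation_tail_estimate_general {Ω : Type*} [MeasurableSpace Ω]
    (μ : Measure Ω) [IsProbabilityMeasure μ] (T r : ℝ)
    (hr : r ∈ Set.Ioo (1/2 : ℝ) 1)
    (E : ℕ → Ω → ℝ) (hmeas : ∀ i, Measurable (E i))
    (hindep : iIndepFun E μ)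
    (hlaw : ∀ i : ℕ, 1 ≤ i → μ.map (E i) = expMeasure (4 * i)) :
    ∃ c > (0:ℝ), ∃ n₀ : ℕ, ∀ n : ℕ, n₀ ≤ n →
      μ {ω | ∑ i ∈ Finset.Icc ⌊(n : ℝ) ^ r / 2⌋₊ n, E i ω < T}
        ≤ ENNReal.ofReal (Real.exp (-c * (n : ℝ) ^ r)) := by
  have hpow : Tendsto (fun n : ℕ => (n : ℝ) ^ r) atTop atTop :=
    (tendsto_rpow_atTop (by linarith [hr.1])).comp tendsto_natCast_atTop_atTop
  have hlog : Tendsto (fun n : ℕ => (1 - r) * log n) atTop atTop :=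
    (tendsto_log_atTop.comp tendsto_natCast_atTop_atTop).const_mul_atTop (by linarith [hr.2])
  obtain ⟨n₀, hn₀⟩ := eventually_atTop.1
    ((hpow.eventually_ge_atTop 2).and (hlog.eventually_ge_atTop (8 * (T + 1))))
  refine ⟨1, one_pos, n₀, fun n hn => ?_⟩
  obtain ⟨hs, hlogn⟩ := hn₀ n hn
  have hone : ∀ i ∈ Icc ⌊(n : ℝ) ^ r / 2⌋₊ n, 1 ≤ i := fun i hi =>
    (Nat.floor_pos.2 (by linarith)).trans_le (mem_Icc.1 hi).1
  have hrate : ∀ i ∈ Icc ⌊(n : ℝ) ^ r / 2⌋₊ n, (0 : ℝ) < 4 * i := fun i hi' => by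
    have := hone i hi'
    positivity
  calc μ {ω | ∑ i ∈ Icc ⌊(n : ℝ) ^ r / 2⌋₊ n, E i ω < T}
      ≤ ENNReal.ofReal (μ.real {ω | ∑ i ∈ Icc ⌊(n : ℝ) ^ r / 2⌋₊ n, E i ω ≤ T}) := by
        rw [ofReal_measureReal]
        exact measure_mono fun _ (hω : _ < T) => hω.le
    _ ≤ ENNReal.ofReal (exp (-1 * (n : ℝ) ^ r)) := by
        refine ENNReal.ofReal_le_ofReal (le_trans ?_ (exp_mul_prod_annihilation_rates_le hs hlogn))
        exact measureReal_sum_le_le_exp_mul_prod_of_expMeasure hmeas hindep hrate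
          (fun i hi' => hlaw i (hone i hi')) (by positivity) T

/-- Annihilation estimate: for independent exponentials `E_i` of rate `4i` and fixed
`T > 0`, `r ∈ (1/2,1)`, there are `c > 0` and `n₀` such that for all `n ≥ n₀`, the
probability that `∑_{i=⌊n^r/2⌋}^{n} E_i < T` is at most `exp(-c n^r)`. -/
theorem annihilation_tail_estimate {Ω : Type*} [MeasurableSpace Ω]
    (μ : Measure Ω) [IsProbabilityMeasure μ] (T r : ℝ) (hT : 0 < T)
    (hr : r ∈ Set.Ioo (1/2 : ℝ) 1)
    (E : ℕ → Ω → ℝ) (hmeas : ∀ i, Measurable (E i))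
    (hindep : iIndepFun E μ)
    (hlaw : ∀ i : ℕ, 1 ≤ i → μ.map (E i) = expMeasure (4 * i)) :
    ∃ c > (0:ℝ), ∃ n₀ : ℕ, ∀ n : ℕ, n₀ ≤ n →
      μ {ω | ∑ i ∈ Finset.Icc ⌊(n : ℝ) ^ r / 2⌋₊ n, E i ω < T}
        ≤ ENNReal.ofReal (Real.exp (-c * (n : ℝ) ^ r)) :=
  annihilation_tail_estimate_general μ T r hr E hmeas hindep hlaw
end

section
/- Let $\varphi(\rho \mid u) = \rho/(\rho + u - \rho u)$ and suppose $\mathcal{H}(\tau,x,y)$ is a smooth function with $\rho(\tau,x,y) = -\partial_x \mathcal{H}$ satisfying both (i) the Burgers equation $\partial_y \rho + \partial_x(\varphi(\rho \mid u(\tau))) = 0$ at each time $\tau$, where $u(\tau) = u + (1-e^{-\tau})\eta$, and (ii) $\partial_\tau \mathcal{H} = e^{-\tau} \eta\, y\, \tilde{J}(\rho \mid u(\tau))$ for some smooth function $\tilde{J}$. Then at every point where $\partial_x \rho \neq 0$, one has $\partial_\rho \tilde{J}(\rho \mid u) = \partial_\rho \partial_u \varphi(\rho \mid u)$. -/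
open Real Filter

private lemma hasDerivAt_sec1 {f : ℝ × ℝ × ℝ → ℝ} {τ x y : ℝ}
    (hf : DifferentiableAt ℝ f (τ, x, y)) :
    HasDerivAt (fun t => f (t, x, y)) (fderiv ℝ f (τ, x, y) (1, 0, 0)) τ :=
  hf.hasFDerivAt.comp_hasDerivAt τ
    ((hasDerivAt_id τ).prodMk ((hasDerivAt_const τ x).prodMk (hasDerivAt_const τ y)))

private lemma hasDerivAt_sec2 {f : ℝ × ℝ × ℝ → ℝ} {τ x y : ℝ}
    (hf : DifferentiableAt ℝ f (τ, x, y)) :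
    HasDerivAt (fun t => f (τ, t, y)) (fderiv ℝ f (τ, x, y) (0, 1, 0)) x :=
  hf.hasFDerivAt.comp_hasDerivAt x
    ((hasDerivAt_const x τ).prodMk ((hasDerivAt_id x).prodMk (hasDerivAt_const x y)))

private lemma hasDerivAt_sec3 {f : ℝ × ℝ × ℝ → ℝ} {τ x y : ℝ}
    (hf : DifferentiableAt ℝ f (τ, x, y)) :
    HasDerivAt (fun t => f (τ, x, t)) (fderiv ℝ f (τ, x, y) (0, 0, 1)) y :=
  hf.hasFDerivAt.comp_hasDerivAt y
    ((hasDerivAt_const y τ).prodMk ((hasDerivAt_const y x).prodMk (hasDerivAt_id y)))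

private lemma hasDerivAt_sec1' {f : ℝ × ℝ → ℝ} {r s : ℝ}
    (hf : DifferentiableAt ℝ f (r, s)) :
    HasDerivAt (fun t => f (t, s)) (fderiv ℝ f (r, s) (1, 0)) r :=
  hf.hasFDerivAt.comp_hasDerivAt r ((hasDerivAt_id r).prodMk (hasDerivAt_const r s))

private lemma contDiff_pd3 {f : ℝ × ℝ × ℝ → ℝ} (hf : ContDiff ℝ (⊤ : ℕ∞) f) (v : ℝ × ℝ × ℝ) :
    ContDiff ℝ (⊤ : ℕ∞) (fun p => fderiv ℝ f p v) :=
  (hf.fderiv_right (by simp)).clm_apply contDiff_const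

private lemma contDiff_pd2 {f : ℝ × ℝ → ℝ} (hf : ContDiff ℝ (⊤ : ℕ∞) f) (v : ℝ × ℝ) :
    ContDiff ℝ (⊤ : ℕ∞) (fun p => fderiv ℝ f p v) :=
  (hf.fderiv_right (by simp)).clm_apply contDiff_const

private lemma pd3_comm {f : ℝ × ℝ × ℝ → ℝ} (hf : ContDiff ℝ (⊤ : ℕ∞) f) (v u : ℝ × ℝ × ℝ)
    (p : ℝ × ℝ × ℝ) :
    fderiv ℝ (fun q => fderiv ℝ f q v) p u = fderiv ℝ (fun q => fderiv ℝ f q u) p v := by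
  have hd : Differentiable ℝ (fderiv ℝ f) := (hf.fderiv_right (m := (⊤ : ℕ∞)) (by simp)).differentiable (by simp)
  have h1 : ∀ q, HasFDerivAt f (fderiv ℝ f q) q := fun q =>
    ((hf.differentiable (by simp)) q).hasFDerivAt
  have h2 : HasFDerivAt (fderiv ℝ f) (fderiv ℝ (fderiv ℝ f) p) p := (hd p).hasFDerivAt
  have hsymm := second_derivative_symmetric h1 h2 u v
  have e1 : fderiv ℝ (fun q => fderiv ℝ f q v) p u = (fderiv ℝ (fderiv ℝ f) p u) v := by
    rw [fderiv_clm_apply (hd p) (differentiableAt_const v)]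
    simp
  have e2 : fderiv ℝ (fun q => fderiv ℝ f q u) p v = (fderiv ℝ (fderiv ℝ f) p v) u := by
    rw [fderiv_clm_apply (hd p) (differentiableAt_const u)]
    simp
  rw [e1, e2, hsymm]


private lemma main_identity
    (F : ℝ × ℝ × ℝ → ℝ) (J2 : ℝ × ℝ → ℝ) (W A : ℝ → ℝ)
    (hF : ContDiff ℝ (⊤ : ℕ∞) F) (hJ : ContDiff ℝ (⊤ : ℕ∞) J2)
    (hW : ∀ t, HasDerivAt W (A t) t)
    (R : ℝ × ℝ × ℝ → ℝ)
    (hR : R = fun p => -(fderiv ℝ F p (0, 1, 0)))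
    (hB : ∀ a b c : ℝ, fderiv ℝ R (a, b, c) (0, 0, 1) +
        deriv (fun x' => R (a, x', c) /
          (R (a, x', c) + W a - R (a, x', c) * W a)) b = 0)
    (hE : ∀ p : ℝ × ℝ × ℝ, fderiv ℝ F p (1, 0, 0) = A p.1 * p.2.2 * J2 (R p, W p.1))
    (τ x y : ℝ)
    (hD : R (τ, x, y) + W τ - R (τ, x, y) * W τ ≠ 0)
    (hx : fderiv ℝ R (τ, x, y) (0, 1, 0) ≠ 0)
    (hA : A τ ≠ 0) :
    fderiv ℝ J2 (R (τ, x, y), W τ) (1, 0) *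
        (R (τ, x, y) + W τ - R (τ, x, y) * W τ) ^ 3 =
      R (τ, x, y) * (1 + W τ) - W τ := by
  have hRc : ContDiff ℝ (⊤ : ℕ∞) R := by rw [hR]; exact (contDiff_pd3 hF _).neg
  have hRd : Differentiable ℝ R := hRc.differentiable (by simp)
  have hJd : Differentiable ℝ J2 := hJ.differentiable (by simp)
  have hRxc : ContDiff ℝ (⊤ : ℕ∞) (fun p => fderiv ℝ R p (0, 1, 0)) := contDiff_pd3 hRc _
  have hRyc : ContDiff ℝ (⊤ : ℕ∞) (fun p => fderiv ℝ R p (0, 0, 1)) := contDiff_pd3 hRc _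
  have hRtc : ContDiff ℝ (⊤ : ℕ∞) (fun p => fderiv ℝ R p (1, 0, 0)) := contDiff_pd3 hRc _
  have hJrd : Differentiable ℝ (fun q => fderiv ℝ J2 q (1, 0)) :=
    (contDiff_pd2 hJ _).differentiable (by simp)
  -- evolution of ρ : h1
  have h1 : ∀ a b c : ℝ, fderiv ℝ R (a, b, c) (1, 0, 0) =
      -(A a * c * (fderiv ℝ J2 (R (a, b, c), W a) (1, 0) *
        fderiv ℝ R (a, b, c) (0, 1, 0))) := by
    intro a b c
    have hA1 : HasDerivAt (fun t => R (t, b, c)) (fderiv ℝ R (a, b, c) (1, 0, 0)) a :=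
      hasDerivAt_sec1 (hRd _)
    have hA2 : HasDerivAt (fun t => R (t, b, c))
        (-(fderiv ℝ (fun q => fderiv ℝ F q (0, 1, 0)) (a, b, c) (1, 0, 0))) a := by
      have h' : HasDerivAt (fun t => fderiv ℝ F (t, b, c) (0, 1, 0))
          (fderiv ℝ (fun q => fderiv ℝ F q (0, 1, 0)) (a, b, c) (1, 0, 0)) a :=
        hasDerivAt_sec1 (((contDiff_pd3 hF (0, 1, 0)).differentiable (by simp)) _)
      have h'' := h'.neg
      have hfe : (fun t => R (t, b, c)) = fun t => -(fderiv ℝ F (t, b, c) (0, 1, 0)) := by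
        funext t; rw [hR]
      rw [hfe]; exact h''
    have e1 : fderiv ℝ R (a, b, c) (1, 0, 0)
        = -(fderiv ℝ (fun q => fderiv ℝ F q (0, 1, 0)) (a, b, c) (1, 0, 0)) := hA1.unique hA2
    rw [e1, pd3_comm hF (0, 1, 0) (1, 0, 0)]
    have hB1 : HasDerivAt (fun t => fderiv ℝ F (a, t, c) (1, 0, 0))
        (fderiv ℝ (fun q => fderiv ℝ F q (1, 0, 0)) (a, b, c) (0, 1, 0)) b :=
      hasDerivAt_sec2 (((contDiff_pd3 hF (1, 0, 0)).differentiable (by simp)) _)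
    have hB2 : HasDerivAt (fun t => fderiv ℝ F (a, t, c) (1, 0, 0))
        (A a * c * (fderiv ℝ J2 (R (a, b, c), W a) (1, 0) *
          fderiv ℝ R (a, b, c) (0, 1, 0))) b := by
      have hcomp : HasDerivAt (fun t => J2 (R (a, t, c), W a))
          (fderiv ℝ J2 (R (a, b, c), W a) (1, 0) * fderiv ℝ R (a, b, c) (0, 1, 0)) b :=
        (hasDerivAt_sec1' (hJd _)).comp b (hasDerivAt_sec2 (hRd _))
      have h2 := hcomp.const_mul (A a * c)
      have hfe : (fun t => fderiv ℝ F (a, t, c) (1, 0, 0))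
          = fun t => A a * c * J2 (R (a, t, c), W a) := by
        funext t; exact hE (a, t, c)
      rw [hfe]; exact h2
    rw [hB1.unique hB2]
  -- clean pointwise Burgers
  have hBclean : ∀ a b c : ℝ, (R (a, b, c) + W a - R (a, b, c) * W a ≠ 0) →
      fderiv ℝ R (a, b, c) (0, 0, 1) + W a * fderiv ℝ R (a, b, c) (0, 1, 0) /
        (R (a, b, c) + W a - R (a, b, c) * W a) ^ 2 = 0 := by
    intro a b c hD'
    have hRx := hasDerivAt_sec2 (hRd (a, b, c))
    have hden : HasDerivAt (fun x' => R (a, x', c) + W a - R (a, x', c) * W a)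
        (fderiv ℝ R (a, b, c) (0, 1, 0) - fderiv ℝ R (a, b, c) (0, 1, 0) * W a) b :=
      (hRx.add_const (W a)).sub (hRx.mul_const (W a))
    have hq : HasDerivAt
        (fun x' => R (a, x', c) / (R (a, x', c) + W a - R (a, x', c) * W a))
        ((fderiv ℝ R (a, b, c) (0, 1, 0) * (R (a, b, c) + W a - R (a, b, c) * W a) -
          R (a, b, c) * (fderiv ℝ R (a, b, c) (0, 1, 0) -
            fderiv ℝ R (a, b, c) (0, 1, 0) * W a)) /
          (R (a, b, c) + W a - R (a, b, c) * W a) ^ 2) b := hRx.div hden hD'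
    have hb := hB a b c
    rw [hq.deriv] at hb
    have h2 : (fderiv ℝ R (a, b, c) (0, 1, 0) * (R (a, b, c) + W a - R (a, b, c) * W a) -
        R (a, b, c) * (fderiv ℝ R (a, b, c) (0, 1, 0) -
          fderiv ℝ R (a, b, c) (0, 1, 0) * W a)) =
        W a * fderiv ℝ R (a, b, c) (0, 1, 0) := by ring
    rw [h2] at hb
    exact hb
  -- E1 at the point
  have hE1 : fderiv ℝ R (τ, x, y) (0, 0, 1) *
        (R (τ, x, y) + W τ - R (τ, x, y) * W τ) ^ 2 +
      W τ * fderiv ℝ R (τ, x, y) (0, 1, 0) = 0 := by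
    have h := hBclean τ x y hD
    have e : W τ * fderiv ℝ R (τ, x, y) (0, 1, 0) / (R (τ, x, y) + W τ - R (τ, x, y) * W τ) ^ 2 *
        (R (τ, x, y) + W τ - R (τ, x, y) * W τ) ^ 2 = W τ * fderiv ℝ R (τ, x, y) (0, 1, 0) :=
      div_mul_cancel₀ _ (pow_ne_zero _ hD)
    linear_combination (R (τ, x, y) + W τ - R (τ, x, y) * W τ) ^ 2 * h - e
  -- eventual nondegeneracy in the x-direction
  have hDcontx : ContinuousAt (fun x' => R (τ, x', y) + W τ - R (τ, x', y) * W τ) x := by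
    have hc : Continuous (fun x' : ℝ => R (τ, x', y)) :=
      hRc.continuous.comp (continuous_const.prodMk (continuous_id.prodMk continuous_const))
    exact ((hc.add continuous_const).sub (hc.mul continuous_const)).continuousAt
  have hevx : ∀ᶠ x' in nhds x, R (τ, x', y) + W τ - R (τ, x', y) * W τ ≠ 0 :=
    hDcontx.eventually_ne hD
  -- E2 : x-derivative of the Burgers equation
  have hE2 : fderiv ℝ (fun p => fderiv ℝ R p (0, 1, 0)) (τ, x, y) (0, 0, 1) *
        (R (τ, x, y) + W τ - R (τ, x, y) * W τ) ^ 4 +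
      W τ * fderiv ℝ (fun p => fderiv ℝ R p (0, 1, 0)) (τ, x, y) (0, 1, 0) *
        (R (τ, x, y) + W τ - R (τ, x, y) * W τ) ^ 2 -
      2 * W τ * (1 - W τ) * fderiv ℝ R (τ, x, y) (0, 1, 0) ^ 2 *
        (R (τ, x, y) + W τ - R (τ, x, y) * W τ) = 0 := by
    have hev0 : (fun x' => fderiv ℝ R (τ, x', y) (0, 0, 1) +
        W τ * fderiv ℝ R (τ, x', y) (0, 1, 0) /
          (R (τ, x', y) + W τ - R (τ, x', y) * W τ) ^ 2) =ᶠ[nhds x] (fun _ => (0:ℝ)) :=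
      hevx.mono (fun x' h => hBclean τ x' y h)
    have hder0 : deriv (fun x' => fderiv ℝ R (τ, x', y) (0, 0, 1) +
        W τ * fderiv ℝ R (τ, x', y) (0, 1, 0) /
          (R (τ, x', y) + W τ - R (τ, x', y) * W τ) ^ 2) x = 0 := by
      rw [hev0.deriv_eq]; exact deriv_const _ _
    have t1 : HasDerivAt (fun x' => fderiv ℝ R (τ, x', y) (0, 0, 1))
        (fderiv ℝ (fun p => fderiv ℝ R p (0, 1, 0)) (τ, x, y) (0, 0, 1)) x := by
      have h := hasDerivAt_sec2 ((hRyc.differentiable (by simp)) (τ, x, y))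
      rwa [pd3_comm hRc (0, 0, 1) (0, 1, 0)] at h
    have t2 : HasDerivAt (fun x' => W τ * fderiv ℝ R (τ, x', y) (0, 1, 0))
        (W τ * fderiv ℝ (fun p => fderiv ℝ R p (0, 1, 0)) (τ, x, y) (0, 1, 0)) x :=
      (hasDerivAt_sec2 ((hRxc.differentiable (by simp)) (τ, x, y))).const_mul (W τ)
    have hRx := hasDerivAt_sec2 (hRd (τ, x, y))
    have hden : HasDerivAt (fun x' => R (τ, x', y) + W τ - R (τ, x', y) * W τ)
        (fderiv ℝ R (τ, x, y) (0, 1, 0) - fderiv ℝ R (τ, x, y) (0, 1, 0) * W τ) x :=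
      (hRx.add_const (W τ)).sub (hRx.mul_const (W τ))
    have hden2 := hden.pow 2
    have hD2 : (R (τ, x, y) + W τ - R (τ, x, y) * W τ) ^ 2 ≠ 0 := pow_ne_zero _ hD
    have hq := t2.div hden2 hD2
    have hsum := (t1.add hq).deriv
    erw [hder0] at hsum
    simp only [Pi.pow_apply] at hsum
    rw [eq_comm, add_div_eq_mul_add_div _ _ (pow_ne_zero 2 hD2), div_eq_zero_iff] at hsum
    linear_combination hsum.resolve_right (pow_ne_zero 2 hD2)
  -- eventual nondegeneracy in the τ-direction
  have hWcont : Continuous W := by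
    have : ∀ t : ℝ, ContinuousAt W t := fun t => (hW t).continuousAt
    exact continuous_iff_continuousAt.mpr this
  have hDcontt : ContinuousAt (fun t => R (t, x, y) + W t - R (t, x, y) * W t) τ := by
    have hc : Continuous (fun t : ℝ => R (t, x, y)) :=
      hRc.continuous.comp (continuous_id.prodMk (continuous_const.prodMk continuous_const))
    exact ((hc.add hWcont).sub (hc.mul hWcont)).continuousAt
  have hevt : ∀ᶠ t in nhds τ, R (t, x, y) + W t - R (t, x, y) * W t ≠ 0 :=
    hDcontt.eventually_ne hD
  -- E3 : τ-derivative of the Burgers equation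
  have hE3 : fderiv ℝ (fun p => fderiv ℝ R p (1, 0, 0)) (τ, x, y) (0, 0, 1) *
        (R (τ, x, y) + W τ - R (τ, x, y) * W τ) ^ 4 +
      (A τ * (R (τ, x, y) + W τ - R (τ, x, y) * W τ) -
        2 * W τ * (fderiv ℝ R (τ, x, y) (1, 0, 0) * (1 - W τ) + A τ * (1 - R (τ, x, y)))) *
        fderiv ℝ R (τ, x, y) (0, 1, 0) * (R (τ, x, y) + W τ - R (τ, x, y) * W τ) +
      W τ * fderiv ℝ (fun p => fderiv ℝ R p (1, 0, 0)) (τ, x, y) (0, 1, 0) *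
        (R (τ, x, y) + W τ - R (τ, x, y) * W τ) ^ 2 = 0 := by
    have hev0 : (fun t => fderiv ℝ R (t, x, y) (0, 0, 1) +
        W t * fderiv ℝ R (t, x, y) (0, 1, 0) /
          (R (t, x, y) + W t - R (t, x, y) * W t) ^ 2) =ᶠ[nhds τ] (fun _ => (0:ℝ)) :=
      hevt.mono (fun t h => hBclean t x y h)
    have hder0 : deriv (fun t => fderiv ℝ R (t, x, y) (0, 0, 1) +
        W t * fderiv ℝ R (t, x, y) (0, 1, 0) /
          (R (t, x, y) + W t - R (t, x, y) * W t) ^ 2) τ = 0 := by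
      rw [hev0.deriv_eq]; exact deriv_const _ _
    have t1 : HasDerivAt (fun t => fderiv ℝ R (t, x, y) (0, 0, 1))
        (fderiv ℝ (fun p => fderiv ℝ R p (1, 0, 0)) (τ, x, y) (0, 0, 1)) τ := by
      have h := hasDerivAt_sec1 ((hRyc.differentiable (by simp)) (τ, x, y))
      rwa [pd3_comm hRc (0, 0, 1) (1, 0, 0)] at h
    have t2 : HasDerivAt (fun t => W t * fderiv ℝ R (t, x, y) (0, 1, 0))
        (A τ * fderiv ℝ R (τ, x, y) (0, 1, 0) +
          W τ * fderiv ℝ (fun p => fderiv ℝ R p (1, 0, 0)) (τ, x, y) (0, 1, 0)) τ := by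
      have h2 := hasDerivAt_sec1 ((hRxc.differentiable (by simp)) (τ, x, y))
      rw [pd3_comm hRc (0, 1, 0) (1, 0, 0)] at h2
      exact (hW τ).mul h2
    have hRt := hasDerivAt_sec1 (hRd (τ, x, y))
    have hden : HasDerivAt (fun t => R (t, x, y) + W t - R (t, x, y) * W t)
        (fderiv ℝ R (τ, x, y) (1, 0, 0) + A τ -
          (fderiv ℝ R (τ, x, y) (1, 0, 0) * W τ + R (τ, x, y) * A τ)) τ :=
      (hRt.add (hW τ)).sub (hRt.mul (hW τ))
    have hden2 := hden.pow 2
    have hD2 : (R (τ, x, y) + W τ - R (τ, x, y) * W τ) ^ 2 ≠ 0 := pow_ne_zero _ hD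
    have hq := t2.div hden2 hD2
    have hsum := (t1.add hq).deriv
    erw [hder0] at hsum
    simp only [Pi.pow_apply] at hsum
    rw [eq_comm, add_div_eq_mul_add_div _ _ (pow_ne_zero 2 hD2), div_eq_zero_iff] at hsum
    linear_combination hsum.resolve_right (pow_ne_zero 2 hD2)
  -- h4, h5, h6 : derivatives of the evolution identity
  have h4 := h1 τ x y
  have h5 : fderiv ℝ (fun p => fderiv ℝ R p (1, 0, 0)) (τ, x, y) (0, 0, 1) =
      -(A τ * (fderiv ℝ J2 (R (τ, x, y), W τ) (1, 0) * fderiv ℝ R (τ, x, y) (0, 1, 0)) +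
        A τ * y * (fderiv ℝ (fun q => fderiv ℝ J2 q (1, 0)) (R (τ, x, y), W τ) (1, 0) *
            fderiv ℝ R (τ, x, y) (0, 0, 1) * fderiv ℝ R (τ, x, y) (0, 1, 0) +
          fderiv ℝ J2 (R (τ, x, y), W τ) (1, 0) *
            fderiv ℝ (fun p => fderiv ℝ R p (0, 1, 0)) (τ, x, y) (0, 0, 1))) := by
    have lhsHD : HasDerivAt (fun c' => fderiv ℝ R (τ, x, c') (1, 0, 0))
        (fderiv ℝ (fun p => fderiv ℝ R p (1, 0, 0)) (τ, x, y) (0, 0, 1)) y :=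
      hasDerivAt_sec3 ((hRtc.differentiable (by simp)) (τ, x, y))
    have hidA : HasDerivAt (fun c' : ℝ => A τ * c') (A τ * 1) y :=
      (hasDerivAt_id y).const_mul (A τ)
    have hJrsec : HasDerivAt (fun c' => fderiv ℝ J2 (R (τ, x, c'), W τ) (1, 0))
        (fderiv ℝ (fun q => fderiv ℝ J2 q (1, 0)) (R (τ, x, y), W τ) (1, 0) *
          fderiv ℝ R (τ, x, y) (0, 0, 1)) y :=
      (hasDerivAt_sec1' (hJrd _)).comp y (hasDerivAt_sec3 (hRd _))
    have hRxsec : HasDerivAt (fun c' => fderiv ℝ R (τ, x, c') (0, 1, 0))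
        (fderiv ℝ (fun p => fderiv ℝ R p (0, 1, 0)) (τ, x, y) (0, 0, 1)) y :=
      hasDerivAt_sec3 ((hRxc.differentiable (by simp)) (τ, x, y))
    have rhsHD := (hidA.mul (hJrsec.mul hRxsec)).neg
    have hfe : (fun c' => fderiv ℝ R (τ, x, c') (1, 0, 0)) =
        fun c' => -(A τ * c' * (fderiv ℝ J2 (R (τ, x, c'), W τ) (1, 0) *
          fderiv ℝ R (τ, x, c') (0, 1, 0))) := funext fun c' => h1 τ x c'
    rw [hfe] at lhsHD
    have e := lhsHD.unique rhsHD
    rw [← hfe] at lhsHD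
    simp only [Pi.mul_apply] at e
    linear_combination e
  have h6 : fderiv ℝ (fun p => fderiv ℝ R p (1, 0, 0)) (τ, x, y) (0, 1, 0) =
      -(A τ * y * (fderiv ℝ (fun q => fderiv ℝ J2 q (1, 0)) (R (τ, x, y), W τ) (1, 0) *
            fderiv ℝ R (τ, x, y) (0, 1, 0) * fderiv ℝ R (τ, x, y) (0, 1, 0) +
          fderiv ℝ J2 (R (τ, x, y), W τ) (1, 0) *
            fderiv ℝ (fun p => fderiv ℝ R p (0, 1, 0)) (τ, x, y) (0, 1, 0))) := by
    have lhsHD : HasDerivAt (fun b' => fderiv ℝ R (τ, b', y) (1, 0, 0))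
        (fderiv ℝ (fun p => fderiv ℝ R p (1, 0, 0)) (τ, x, y) (0, 1, 0)) x :=
      hasDerivAt_sec2 ((hRtc.differentiable (by simp)) (τ, x, y))
    have hconst : HasDerivAt (fun _ : ℝ => A τ * y) 0 x := hasDerivAt_const x (A τ * y)
    have hJrsec : HasDerivAt (fun b' => fderiv ℝ J2 (R (τ, b', y), W τ) (1, 0))
        (fderiv ℝ (fun q => fderiv ℝ J2 q (1, 0)) (R (τ, x, y), W τ) (1, 0) *
          fderiv ℝ R (τ, x, y) (0, 1, 0)) x :=
      (hasDerivAt_sec1' (hJrd _)).comp x (hasDerivAt_sec2 (hRd _))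
    have hRxsec : HasDerivAt (fun b' => fderiv ℝ R (τ, b', y) (0, 1, 0))
        (fderiv ℝ (fun p => fderiv ℝ R p (0, 1, 0)) (τ, x, y) (0, 1, 0)) x :=
      hasDerivAt_sec2 ((hRxc.differentiable (by simp)) (τ, x, y))
    have rhsHD := (hconst.mul (hJrsec.mul hRxsec)).neg
    have hfe : (fun b' => fderiv ℝ R (τ, b', y) (1, 0, 0)) =
        fun b' => -(A τ * y * (fderiv ℝ J2 (R (τ, b', y), W τ) (1, 0) *
          fderiv ℝ R (τ, b', y) (0, 1, 0))) := funext fun b' => h1 τ b' y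
    rw [hfe] at lhsHD
    have e := lhsHD.unique rhsHD
    linear_combination e
  -- the key algebraic combination
  have key : (R (τ, x, y) + W τ - R (τ, x, y) * W τ) * (A τ *
      (fderiv ℝ R (τ, x, y) (0, 1, 0) *
        (fderiv ℝ J2 (R (τ, x, y), W τ) (1, 0) *
            (R (τ, x, y) + W τ - R (τ, x, y) * W τ) ^ 3 -
          (R (τ, x, y) * (1 + W τ) - W τ)))) = 0 := by
    linear_combination (-1 : ℝ) * hE3 +
      ((R (τ, x, y) + W τ - R (τ, x, y) * W τ) ^ 4) * h5 +
      (-(2 * W τ * (1 - W τ) * fderiv ℝ R (τ, x, y) (0, 1, 0) *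
        (R (τ, x, y) + W τ - R (τ, x, y) * W τ))) * h4 +
      (W τ * (R (τ, x, y) + W τ - R (τ, x, y) * W τ) ^ 2) * h6 +
      (-(A τ * y * fderiv ℝ (fun q => fderiv ℝ J2 q (1, 0)) (R (τ, x, y), W τ) (1, 0) *
        fderiv ℝ R (τ, x, y) (0, 1, 0) *
        (R (τ, x, y) + W τ - R (τ, x, y) * W τ) ^ 2)) * hE1 +
      (-(A τ * y * fderiv ℝ J2 (R (τ, x, y), W τ) (1, 0))) * hE2
  rcases mul_eq_zero.mp key with h | h
  · exact absurd h hD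
  rcases mul_eq_zero.mp h with h' | h'
  · exact absurd h' hA
  rcases mul_eq_zero.mp h' with h'' | h''
  · exact absurd h'' hx
  linarith [h'']

/-- Consistency of the (2+1)-dimensional hydrodynamic equation with the Burgers equation:
if the limiting height function `H` satisfies the Burgers equation at each time and
`∂_τ H = e^{-τ} η y J̃(ρ ∣ u(τ))`, then wherever `∂_x ρ ≠ 0` one has
`∂_ρ J̃(ρ ∣ u) = ∂_ρ ∂_u φ(ρ ∣ u)`, where `φ(ρ ∣ u) = ρ/(ρ+u-ρu)`. -/
theorem hydrodynamic_consistency (u₀ η : ℝ) (hu₀ : 0 < u₀) (hη : 0 < η)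
    (hu₀1 : u₀ < 1) (hu₀η : u₀ + η < 1)
    (H : ℝ → ℝ → ℝ → ℝ) (J : ℝ → ℝ → ℝ)
    (hH : ContDiff ℝ (⊤ : ℕ∞) (fun p : ℝ × ℝ × ℝ => H p.1 p.2.1 p.2.2))
    (hJ : ContDiff ℝ (⊤ : ℕ∞) (fun p : ℝ × ℝ => J p.1 p.2))
    (ρ : ℝ → ℝ → ℝ → ℝ)
    (hρ : ∀ τ x y, ρ τ x y = -(deriv (fun x' => H τ x' y) x))
    (hBurgers : ∀ τ x y,
      deriv (fun y' => ρ τ x y') y +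
        deriv (fun x' => ρ τ x' y / (ρ τ x' y + (u₀ + (1 - Real.exp (-τ)) * η)
          - ρ τ x' y * (u₀ + (1 - Real.exp (-τ)) * η))) x = 0)
    (hEvol : ∀ τ x y,
      deriv (fun τ' => H τ' x y) τ =
        Real.exp (-τ) * η * y * J (ρ τ x y) (u₀ + (1 - Real.exp (-τ)) * η)) :
    ∀ τ x y, deriv (fun x' => ρ τ x' y) x ≠ 0 →
      deriv (fun r => J r (u₀ + (1 - Real.exp (-τ)) * η)) (ρ τ x y) =
        deriv (fun r => deriv (fun w => r / (r + w - r * w))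
          (u₀ + (1 - Real.exp (-τ)) * η)) (ρ τ x y) := by
  obtain ⟨R, hRdef⟩ : ∃ R' : ℝ × ℝ × ℝ → ℝ,
      R' = fun p => -(fderiv ℝ (fun q : ℝ × ℝ × ℝ => H q.1 q.2.1 q.2.2) p (0, 1, 0)) :=
    ⟨_, rfl⟩
  have hRc : ContDiff ℝ (⊤ : ℕ∞) R := by rw [hRdef]; exact (contDiff_pd3 hH _).neg
  have hRd : Differentiable ℝ R := hRc.differentiable (by simp)
  have hJd : Differentiable ℝ (fun p : ℝ × ℝ => J p.1 p.2) := hJ.differentiable (by simp)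
  have hW : ∀ t : ℝ, HasDerivAt (fun s : ℝ => u₀ + (1 - Real.exp (-s)) * η)
      (Real.exp (-t) * η) t := by
    intro t
    have h1 : HasDerivAt (fun s : ℝ => -s) (-1) t := (hasDerivAt_id t).neg
    have h2 : HasDerivAt (fun s : ℝ => Real.exp (-s)) (Real.exp (-t) * -1) t :=
      (Real.hasDerivAt_exp (-t)).comp t h1
    have h4 := ((h2.const_sub 1).mul_const η).const_add u₀
    have h5 : -(Real.exp (-t) * -1) * η = Real.exp (-t) * η := by ring
    rw [h5] at h4
    exact h4
  have hρR : ∀ a b c : ℝ, ρ a b c = R (a, b, c) := by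
    intro a b c
    rw [hρ, hRdef]
    exact congrArg Neg.neg (hasDerivAt_sec2 ((hH.differentiable (by simp)) (a, b, c))).deriv
  have hB' : ∀ a b c : ℝ, fderiv ℝ R (a, b, c) (0, 0, 1) +
      deriv (fun x' => R (a, x', c) / (R (a, x', c) + (u₀ + (1 - Real.exp (-a)) * η)
        - R (a, x', c) * (u₀ + (1 - Real.exp (-a)) * η))) b = 0 := by
    intro a b c
    have hb := hBurgers a b c
    simp only [hρR] at hb
    have h3 : deriv (fun y' => R (a, b, y')) c = fderiv ℝ R (a, b, c) (0, 0, 1) :=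
      (hasDerivAt_sec3 (hRd (a, b, c))).deriv
    rw [h3] at hb
    exact hb
  have hE' : ∀ p : ℝ × ℝ × ℝ, fderiv ℝ (fun q : ℝ × ℝ × ℝ => H q.1 q.2.1 q.2.2) p (1, 0, 0) =
      Real.exp (-p.1) * η * p.2.2 * J (R p) (u₀ + (1 - Real.exp (-p.1)) * η) := by
    rintro ⟨a, b, c⟩
    have h1 : deriv (fun τ' => H τ' b c) a =
        fderiv ℝ (fun q : ℝ × ℝ × ℝ => H q.1 q.2.1 q.2.2) (a, b, c) (1, 0, 0) :=
      (hasDerivAt_sec1 ((hH.differentiable (by simp)) (a, b, c))).deriv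
    have h2 := hEvol a b c
    rw [h1, hρR] at h2
    exact h2
  intro τ x y hx
  simp only [hρR] at hx ⊢
  have hsec2 : deriv (fun x' => R (τ, x', y)) x = fderiv ℝ R (τ, x, y) (0, 1, 0) :=
    (hasDerivAt_sec2 (hRd (τ, x, y))).deriv
  rw [hsec2] at hx
  have hA' : Real.exp (-τ) * η ≠ 0 := ne_of_gt (mul_pos (Real.exp_pos _) hη)
  have hw1 : u₀ + (1 - Real.exp (-τ)) * η < 1 := by
    nlinarith [Real.exp_pos (-τ), mul_pos (Real.exp_pos (-τ)) hη]
  -- continuity of the x-sections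
  have hRsc : ContinuousAt (fun x' => R (τ, x', y)) x :=
    (hRc.continuous.comp
      (continuous_const.prodMk (continuous_id.prodMk continuous_const))).continuousAt
  have hRxsc : ContinuousAt (fun x' => fderiv ℝ R (τ, x', y) (0, 1, 0)) x :=
    ((contDiff_pd3 hRc (0, 1, 0)).continuous.comp
      (continuous_const.prodMk (continuous_id.prodMk continuous_const))).continuousAt
  -- nondegeneracy at the point
  have hD : R (τ, x, y) + (u₀ + (1 - Real.exp (-τ)) * η)
      - R (τ, x, y) * (u₀ + (1 - Real.exp (-τ)) * η) ≠ 0 := by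
    by_contra hD0
    -- the "denominator" as a function of x'
    have hRxsec : HasDerivAt (fun x' => R (τ, x', y)) (fderiv ℝ R (τ, x, y) (0, 1, 0)) x :=
      hasDerivAt_sec2 (hRd (τ, x, y))
    have hfd : HasDerivAt (fun x' => R (τ, x', y) + (u₀ + (1 - Real.exp (-τ)) * η)
        - R (τ, x', y) * (u₀ + (1 - Real.exp (-τ)) * η))
        (fderiv ℝ R (τ, x, y) (0, 1, 0) -
          fderiv ℝ R (τ, x, y) (0, 1, 0) * (u₀ + (1 - Real.exp (-τ)) * η)) x :=
      (hRxsec.add_const _).sub (hRxsec.mul_const _)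
    have hf' : fderiv ℝ R (τ, x, y) (0, 1, 0) -
        fderiv ℝ R (τ, x, y) (0, 1, 0) * (u₀ + (1 - Real.exp (-τ)) * η) ≠ 0 := by
      have h1 : fderiv ℝ R (τ, x, y) (0, 1, 0) -
          fderiv ℝ R (τ, x, y) (0, 1, 0) * (u₀ + (1 - Real.exp (-τ)) * η) =
          fderiv ℝ R (τ, x, y) (0, 1, 0) * (1 - (u₀ + (1 - Real.exp (-τ)) * η)) := by ring
      rw [h1]
      exact mul_ne_zero hx (by linarith)
    have hslope := hasDerivAt_iff_tendsto_slope.mp hfd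
    have hfne : ∀ᶠ x' in nhdsWithin x {x}ᶜ,
        R (τ, x', y) + (u₀ + (1 - Real.exp (-τ)) * η)
          - R (τ, x', y) * (u₀ + (1 - Real.exp (-τ)) * η) ≠ 0 := by
      filter_upwards [hslope.eventually_ne hf', self_mem_nhdsWithin] with x' h1 h2 hc
      apply h1
      rw [slope_def_field]
      rw [hc, hD0]
      simp
    have hrxne : ∀ᶠ x' in nhdsWithin x {x}ᶜ, fderiv ℝ R (τ, x', y) (0, 1, 0) ≠ 0 :=
      (hRxsc.eventually_ne hx).filter_mono nhdsWithin_le_nhds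
    have hMAIN : ∀ᶠ x' in nhdsWithin x {x}ᶜ,
        fderiv ℝ (fun p : ℝ × ℝ => J p.1 p.2)
            (R (τ, x', y), u₀ + (1 - Real.exp (-τ)) * η) (1, 0) *
          (R (τ, x', y) + (u₀ + (1 - Real.exp (-τ)) * η)
            - R (τ, x', y) * (u₀ + (1 - Real.exp (-τ)) * η)) ^ 3 =
          R (τ, x', y) * (1 + (u₀ + (1 - Real.exp (-τ)) * η))
            - (u₀ + (1 - Real.exp (-τ)) * η) := by
      filter_upwards [hfne, hrxne] with x' h1 h2
      exact main_identity (fun q : ℝ × ℝ × ℝ => H q.1 q.2.1 q.2.2)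
        (fun q : ℝ × ℝ => J q.1 q.2) (fun t => u₀ + (1 - Real.exp (-t)) * η)
        (fun t => Real.exp (-t) * η) hH hJ hW R hRdef hB' hE' τ x' y h1 h2 hA'
    -- limits along the punctured neighbourhood
    have hTJ : Filter.Tendsto (fun x' => fderiv ℝ (fun p : ℝ × ℝ => J p.1 p.2)
        (R (τ, x', y), u₀ + (1 - Real.exp (-τ)) * η) (1, 0)) (nhdsWithin x {x}ᶜ)
        (nhds (fderiv ℝ (fun p : ℝ × ℝ => J p.1 p.2)
          (R (τ, x, y), u₀ + (1 - Real.exp (-τ)) * η) (1, 0))) := by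
      have hc : ContinuousAt (fun x' => fderiv ℝ (fun p : ℝ × ℝ => J p.1 p.2)
          (R (τ, x', y), u₀ + (1 - Real.exp (-τ)) * η) (1, 0)) x :=
        ((contDiff_pd2 hJ (1, 0)).continuous.continuousAt).comp
          (hRsc.prodMk continuousAt_const)
      exact hc.tendsto.mono_left nhdsWithin_le_nhds
    have hTf : Filter.Tendsto (fun x' => R (τ, x', y) + (u₀ + (1 - Real.exp (-τ)) * η)
        - R (τ, x', y) * (u₀ + (1 - Real.exp (-τ)) * η)) (nhdsWithin x {x}ᶜ) (nhds 0) := by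
      have hc : ContinuousAt (fun x' => R (τ, x', y) + (u₀ + (1 - Real.exp (-τ)) * η)
          - R (τ, x', y) * (u₀ + (1 - Real.exp (-τ)) * η)) x :=
        (hRsc.add continuousAt_const).sub (hRsc.mul continuousAt_const)
      rw [← hD0]
      exact hc.tendsto.mono_left nhdsWithin_le_nhds
    have hTM : Filter.Tendsto (fun x' => R (τ, x', y) * (1 + (u₀ + (1 - Real.exp (-τ)) * η))
        - (u₀ + (1 - Real.exp (-τ)) * η)) (nhdsWithin x {x}ᶜ)
        (nhds (R (τ, x, y) * (1 + (u₀ + (1 - Real.exp (-τ)) * η))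
          - (u₀ + (1 - Real.exp (-τ)) * η))) :=
      ((hRsc.mul continuousAt_const).sub continuousAt_const).tendsto.mono_left
        nhdsWithin_le_nhds
    have hT1 : Filter.Tendsto (fun x' => R (τ, x', y) * (1 + (u₀ + (1 - Real.exp (-τ)) * η))
        - (u₀ + (1 - Real.exp (-τ)) * η)) (nhdsWithin x {x}ᶜ) (nhds 0) := by
      have h0 := hTJ.mul (hTf.pow 3)
      rw [show (0:ℝ) ^ 3 = 0 by norm_num, mul_zero] at h0
      exact h0.congr' hMAIN
    have hM0 : R (τ, x, y) * (1 + (u₀ + (1 - Real.exp (-τ)) * η))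
        - (u₀ + (1 - Real.exp (-τ)) * η) = 0 := tendsto_nhds_unique hTM hT1
    have hR0 : R (τ, x, y) = 0 := by nlinarith [hD0, hM0]
    have hw0 : u₀ + (1 - Real.exp (-τ)) * η = 0 := by nlinarith [hD0, hR0]
    -- second limit: the function is eventually 1 but tends to 0
    have hEv1 : ∀ᶠ x' in nhdsWithin x {x}ᶜ,
        fderiv ℝ (fun p : ℝ × ℝ => J p.1 p.2)
            (R (τ, x', y), u₀ + (1 - Real.exp (-τ)) * η) (1, 0) *
          (R (τ, x', y) + (u₀ + (1 - Real.exp (-τ)) * η)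
            - R (τ, x', y) * (u₀ + (1 - Real.exp (-τ)) * η)) ^ 2 = 1 := by
      filter_upwards [hMAIN, hfne] with x' h1 h2
      have hMf : R (τ, x', y) * (1 + (u₀ + (1 - Real.exp (-τ)) * η))
          - (u₀ + (1 - Real.exp (-τ)) * η) =
          R (τ, x', y) + (u₀ + (1 - Real.exp (-τ)) * η)
            - R (τ, x', y) * (u₀ + (1 - Real.exp (-τ)) * η) := by
        rw [hw0]; ring
      apply mul_right_cancel₀ h2
      rw [one_mul]
      linear_combination h1 + hMf
    have hT2 : Filter.Tendsto (fun x' =>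
        fderiv ℝ (fun p : ℝ × ℝ => J p.1 p.2)
            (R (τ, x', y), u₀ + (1 - Real.exp (-τ)) * η) (1, 0) *
          (R (τ, x', y) + (u₀ + (1 - Real.exp (-τ)) * η)
            - R (τ, x', y) * (u₀ + (1 - Real.exp (-τ)) * η)) ^ 2) (nhdsWithin x {x}ᶜ)
        (nhds 0) := by
      have h0 := hTJ.mul (hTf.pow 2)
      rw [show (0:ℝ) ^ 2 = 0 by norm_num, mul_zero] at h0
      exact h0
    have : (0 : ℝ) = 1 := tendsto_nhds_unique (hT2.congr' hEv1) tendsto_const_nhds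
    norm_num at this
  -- apply the main identity at the point
  have hKey : fderiv ℝ (fun p : ℝ × ℝ => J p.1 p.2)
      (R (τ, x, y), u₀ + (1 - Real.exp (-τ)) * η) (1, 0) *
        (R (τ, x, y) + (u₀ + (1 - Real.exp (-τ)) * η)
          - R (τ, x, y) * (u₀ + (1 - Real.exp (-τ)) * η)) ^ 3 =
      R (τ, x, y) * (1 + (u₀ + (1 - Real.exp (-τ)) * η)) - (u₀ + (1 - Real.exp (-τ)) * η) :=
    main_identity (fun q : ℝ × ℝ × ℝ => H q.1 q.2.1 q.2.2)
      (fun q : ℝ × ℝ => J q.1 q.2) (fun t => u₀ + (1 - Real.exp (-t)) * η)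
      (fun t => Real.exp (-t) * η) hH hJ hW R hRdef hB' hE' τ x y hD hx hA'
  -- compute the left-hand side of the goal
  have hLHS : deriv (fun r => J r (u₀ + (1 - Real.exp (-τ)) * η)) (R (τ, x, y)) =
      fderiv ℝ (fun p : ℝ × ℝ => J p.1 p.2)
        (R (τ, x, y), u₀ + (1 - Real.exp (-τ)) * η) (1, 0) :=
    (hasDerivAt_sec1' (hJd _)).deriv
  -- compute the right-hand side of the goal
  have hDcont : ContinuousAt (fun r : ℝ => r + (u₀ + (1 - Real.exp (-τ)) * η)
      - r * (u₀ + (1 - Real.exp (-τ)) * η)) (R (τ, x, y)) :=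
    ((continuousAt_id.add continuousAt_const).sub (continuousAt_id.mul continuousAt_const))
  have hinner : (fun r : ℝ => deriv (fun w => r / (r + w - r * w))
      (u₀ + (1 - Real.exp (-τ)) * η)) =ᶠ[nhds (R (τ, x, y))]
      (fun r : ℝ => -(r * (1 - r)) /
        (r + (u₀ + (1 - Real.exp (-τ)) * η) - r * (u₀ + (1 - Real.exp (-τ)) * η)) ^ 2) := by
    filter_upwards [hDcont.eventually_ne hD] with r hr
    have hden : HasDerivAt (fun w : ℝ => r + w - r * w)
        (1 - r * 1) (u₀ + (1 - Real.exp (-τ)) * η) :=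
      (((hasDerivAt_id _).const_add r).sub ((hasDerivAt_id _).const_mul r))
    have hq := (hasDerivAt_const (u₀ + (1 - Real.exp (-τ)) * η) r).div hden hr
    erw [hq.deriv]
    ring
  have hnum : HasDerivAt (fun r : ℝ => -(r * (1 - r)))
      (-(1 * (1 - R (τ, x, y)) + R (τ, x, y) * -1)) (R (τ, x, y)) :=
    ((hasDerivAt_id _).mul ((hasDerivAt_id _).const_sub 1)).neg
  have hden : HasDerivAt (fun r : ℝ => (r + (u₀ + (1 - Real.exp (-τ)) * η)
      - r * (u₀ + (1 - Real.exp (-τ)) * η)) ^ 2)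
      (2 * (R (τ, x, y) + (u₀ + (1 - Real.exp (-τ)) * η)
        - R (τ, x, y) * (u₀ + (1 - Real.exp (-τ)) * η)) ^ (2 - 1) *
        (1 - 1 * (u₀ + (1 - Real.exp (-τ)) * η))) (R (τ, x, y)) :=
    (((hasDerivAt_id _).add_const _).sub ((hasDerivAt_id _).mul_const _)).pow 2
  have hD2 : (R (τ, x, y) + (u₀ + (1 - Real.exp (-τ)) * η)
      - R (τ, x, y) * (u₀ + (1 - Real.exp (-τ)) * η)) ^ 2 ≠ 0 := pow_ne_zero _ hD
  have houter := (hnum.div hden hD2).deriv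
  erw [hLHS, hinner.deriv_eq, houter]
  rw [eq_div_iff (pow_ne_zero 2 hD2)]
  linear_combination (R (τ, x, y) + (u₀ + (1 - Real.exp (-τ)) * η)
    - R (τ, x, y) * (u₀ + (1 - Real.exp (-τ)) * η)) * hKey
end
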